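/- Suppose for each i, R_i and V_{ri} are differentiable real-valued functions with Ṙ_i = V_{ri} and V̇_{ri} = −κ₂(V_{ri} + c) − R_i, where κ₂ > 0, c ≥ 0, and μ_i is differentiable with μ̇_i = (1 + (V_{ri} + c)²)⁻¹ μ_i R_i (V_{ri} + c). Then the function V₂(t) = (1/2)Σ_i Σ_j a_{ij}[(R_i − R_j)² + (V_{ri} − V_{rj})²] + (1/2)Σ_i μ_i²(V_{ri} + c)² + (1/2)Σ_i μ_i², with nonnegative weights a_{ij}, has derivative V̇₂(t) = −κ₂ Σ_i Σ_j a_{ij}(V_{ri} − V_{rj})² − κ₂ Σ_i μ_i²(V_{ri} + c)², which is ≤ 0. -/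

import Mathlib

/-!
Both parts of `V₂` are energies along trajectories. Every difference `(R_i - R_j, V_{ri} - V_{rj})`
is a damped linear oscillator `x' = v, v' = -κ₂ v - x` (the offset `c` cancels), whose energy
`x² + v²` decays at the rate `-2κ₂ v²`. For the adaptive part, `w = V_{ri} + c` obeys
`w' = -κ₂ w - R_i`, and the update law for `μ_i` is chosen so that `μ_i μ̇_i (1 + w²)` exactly
cancels the cross term `-μ_i² w R_i`.
-/

open Real Finset

theorem hasDerivAt_sq_add_sq_of_damped_oscillator {x v : ℝ → ℝ} {κ t : ℝ}
    (hx : HasDerivAt x (v t) t) (hv : HasDerivAt v (-κ * v t - x t) t) :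
    HasDerivAt (fun τ => x τ ^ 2 + v τ ^ 2) (-2 * κ * v t ^ 2) t :=
  ((hx.fun_pow 2).fun_add (hv.fun_pow 2)).congr_deriv (by ring)

theorem hasDerivAt_adaptive_energy {μ w r : ℝ → ℝ} {κ t : ℝ}
    (hw : HasDerivAt w (-κ * w t - r t) t)
    (hμ : HasDerivAt μ ((1 + w t ^ 2)⁻¹ * μ t * r t * w t) t) :
    HasDerivAt (fun τ => μ τ ^ 2 * w τ ^ 2 + μ τ ^ 2) (-2 * κ * (μ t ^ 2 * w t ^ 2)) t := by
  have hpos : 1 + w t ^ 2 ≠ 0 := by positivity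
  refine (((hμ.fun_pow 2).fun_mul (hw.fun_pow 2)).fun_add (hμ.fun_pow 2)).congr_deriv ?_
  field_simp
  ring

theorem V2_deriv_general
    (N : ℕ) (R Vr μ : Fin N → ℝ → ℝ) (a : Fin N → Fin N → ℝ)
    (κ2 c : ℝ) (hκ2 : 0 < κ2)
    (ha : ∀ i j, 0 ≤ a i j)
    (hR : ∀ i t, HasDerivAt (R i) (Vr i t) t)
    (hVr : ∀ i t, HasDerivAt (Vr i) (-κ2 * (Vr i t + c) - R i t) t)
    (hμ : ∀ i t, HasDerivAt (μ i)
      ((1 + (Vr i t + c) ^ 2)⁻¹ * μ i t * R i t * (Vr i t + c)) t)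
    (t : ℝ) :
    HasDerivAt (fun τ =>
        (1 / 2) * ∑ i, ∑ j, a i j *
          ((R i τ - R j τ) ^ 2 + (Vr i τ - Vr j τ) ^ 2)
        + (1 / 2) * ∑ i, (μ i τ) ^ 2 * (Vr i τ + c) ^ 2
        + (1 / 2) * ∑ i, (μ i τ) ^ 2)
      (-κ2 * ∑ i, ∑ j, a i j * (Vr i t - Vr j t) ^ 2
        - κ2 * ∑ i, (μ i t) ^ 2 * (Vr i t + c) ^ 2) t ∧
    (-κ2 * ∑ i, ∑ j, a i j * (Vr i t - Vr j t) ^ 2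
        - κ2 * ∑ i, (μ i t) ^ 2 * (Vr i t + c) ^ 2) ≤ 0 := by
  have hcons := HasDerivAt.fun_sum (u := univ) fun i _ => HasDerivAt.fun_sum (u := univ) fun j _ =>
    (hasDerivAt_sq_add_sq_of_damped_oscillator (x := fun τ => R i τ - R j τ)
      (v := fun τ => Vr i τ - Vr j τ) ((hR i t).sub (hR j t))
      (((hVr i t).sub (hVr j t)).congr_deriv (by ring))).const_mul (a i j)
  have hadapt := HasDerivAt.fun_sum (u := univ) fun i _ =>
    hasDerivAt_adaptive_energy (w := fun τ => Vr i τ + c) ((hVr i t).add_const c) (hμ i t)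
  have hS : 0 ≤ ∑ i, ∑ j, a i j * (Vr i t - Vr j t) ^ 2 :=
    sum_nonneg fun i _ => sum_nonneg fun j _ => mul_nonneg (ha i j) (sq_nonneg _)
  have hT : 0 ≤ ∑ i, μ i t ^ 2 * (Vr i t + c) ^ 2 :=
    sum_nonneg fun i _ => mul_nonneg (sq_nonneg _) (sq_nonneg _)
  refine ⟨?_, by nlinarith⟩
  have hV₂ : (fun τ => (1 / 2) * ∑ i, ∑ j, a i j * ((R i τ - R j τ) ^ 2 + (Vr i τ - Vr j τ) ^ 2)
        + (1 / 2) * ∑ i, (μ i τ) ^ 2 * (Vr i τ + c) ^ 2 + (1 / 2) * ∑ i, (μ i τ) ^ 2) =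
      fun τ => (1 / 2) * ∑ i, ∑ j, a i j * ((R i τ - R j τ) ^ 2 + (Vr i τ - Vr j τ) ^ 2)
        + (1 / 2) * ∑ i, ((μ i τ) ^ 2 * (Vr i τ + c) ^ 2 + (μ i τ) ^ 2) := by
    ext τ
    rw [sum_add_distrib]
    ring
  rw [hV₂]
  refine ((hcons.const_mul (1 / 2)).fun_add (hadapt.const_mul (1 / 2))).congr_deriv ?_
  simp only [mul_left_comm (a _ _) (-2 * κ2), ← mul_sum]
  ring

/-- Derivative of the tangential Lyapunov function `V₂` under the closed-loop
tangential dynamics. -/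
theorem V2_deriv
    (N : ℕ) (R Vr μ : Fin N → ℝ → ℝ) (a : Fin N → Fin N → ℝ)
    (κ2 c : ℝ) (hκ2 : 0 < κ2) (hc : 0 ≤ c)
    (ha : ∀ i j, 0 ≤ a i j)
    (hR : ∀ i t, HasDerivAt (R i) (Vr i t) t)
    (hVr : ∀ i t, HasDerivAt (Vr i) (-κ2 * (Vr i t + c) - R i t) t)
    (hμ : ∀ i t, HasDerivAt (μ i)
      ((1 + (Vr i t + c) ^ 2)⁻¹ * μ i t * R i t * (Vr i t + c)) t)
    (t : ℝ) :
    HasDerivAt (fun τ =>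
        (1 / 2) * ∑ i, ∑ j, a i j *
          ((R i τ - R j τ) ^ 2 + (Vr i τ - Vr j τ) ^ 2)
        + (1 / 2) * ∑ i, (μ i τ) ^ 2 * (Vr i τ + c) ^ 2
        + (1 / 2) * ∑ i, (μ i τ) ^ 2)
      (-κ2 * ∑ i, ∑ j, a i j * (Vr i t - Vr j t) ^ 2
        - κ2 * ∑ i, (μ i t) ^ 2 * (Vr i t + c) ^ 2) t ∧
    (-κ2 * ∑ i, ∑ j, a i j * (Vr i t - Vr j t) ^ 2
        - κ2 * ∑ i, (μ i t) ^ 2 * (Vr i t + c) ^ 2) ≤ 0 :=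
  V2_deriv_general N R Vr μ a κ2 c hκ2 ha hR hVr hμ t
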